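/- arXiv:1510.02643 — 4 statements merged into one kernel-verified Lean document; each statement's English description precedes it below -/
import Mathlib

section
/- Let G1 and G2 be graphs on the same edge set with L(G1) = L(G2), where each L(Gi) has at least two circuits. Then an edge e is a cut-edge of G1 if and only if e is a cut-edge of G2. -/
open Finset

/-- A multigraph with vertex type `V`, edge-label type `α`, edge set `E`,
and an endpoints function assigning to each edge an unordered pair of vertices. -/
structure MGraph (V : Type) (α : Type) where
  E : Finset α
  ends : α → Sym2 V

namespace MGraph

variable {V V₁ V₂ : Type} {α : Type} [DecidableEq V] [DecidableEq V₁] [DecidableEq V₂]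
  [DecidableEq α]

/-- `u` and `v` are joined by an edge of `X`. -/
def Adj (G : MGraph V α) (X : Finset α) (u v : V) : Prop :=
  ∃ e ∈ X, G.ends e = s(u, v)

/-- `v` is incident with an edge of `X`. -/
def VIn (G : MGraph V α) (X : Finset α) (v : V) : Prop :=
  ∃ e ∈ X, v ∈ G.ends e

/-- The degree of `v` in the edge set `X` (loops count twice). -/
def degIn (G : MGraph V α) (X : Finset α) (v : V) : ℕ :=
  ∑ e ∈ X, (if G.ends e = s(v, v) then 2 else if v ∈ G.ends e then 1 else 0)

/-- `C` is the edge set of a cycle of `G`: a nonempty connected 2-regular subgraph. -/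
def IsCycle (G : MGraph V α) (C : Finset α) : Prop :=
  C.Nonempty ∧ C ⊆ G.E ∧ (∀ v, G.VIn C v → G.degIn C v = 2) ∧
    ∀ u v, G.VIn C u → G.VIn C v → Relation.ReflTransGen (G.Adj C) u v

/-- The subgraph on edge set `X` contains at least two (distinct) cycles. -/
def TwoCycles (G : MGraph V α) (X : Finset α) : Prop :=
  ∃ C₁ C₂ : Finset α, G.IsCycle C₁ ∧ G.IsCycle C₂ ∧ C₁ ⊆ X ∧ C₂ ⊆ X ∧ C₁ ≠ C₂

/-- `X` is a circuit of the bicircular lift matroid `L(G)`: a minimal edge set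
containing at least two cycles. -/
def LiftCircuit (G : MGraph V α) (X : Finset α) : Prop :=
  X ⊆ G.E ∧ G.TwoCycles X ∧ ∀ Y ⊂ X, ¬ G.TwoCycles Y

/-- `X` is independent in the bicircular lift matroid `L(G)`. -/
def LiftIndep (G : MGraph V α) (X : Finset α) : Prop :=
  X ⊆ G.E ∧ ∀ C ⊆ X, ¬ G.LiftCircuit C

/-- `L(G)` has at least two circuits. -/
def TwoLiftCircuits (G : MGraph V α) : Prop :=
  ∃ X Y : Finset α, G.LiftCircuit X ∧ G.LiftCircuit Y ∧ X ≠ Y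

/-- Equality of the bicircular lift matroids `L(G₁) = L(G₂)` (equal ground sets
and equal circuit collections). -/
def LiftEq (G₁ : MGraph V₁ α) (G₂ : MGraph V₂ α) : Prop :=
  G₁.E = G₂.E ∧ ∀ X : Finset α, G₁.LiftCircuit X ↔ G₂.LiftCircuit X

/-- `G₁` and `G₂` are 2-isomorphic, i.e. their graphic matroids on the common
edge set are equal (equivalently, they have the same cycles). -/
def TwoIso (G₁ : MGraph V₁ α) (G₂ : MGraph V₂ α) : Prop :=
  G₁.E = G₂.E ∧ ∀ X : Finset α, G₁.IsCycle X ↔ G₂.IsCycle X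

/-- `G` has no loops. -/
def Loopless (G : MGraph V α) : Prop := ∀ e ∈ G.E, ¬ (G.ends e).IsDiag

/-- `G` is connected. -/
def Connected (G : MGraph V α) : Prop :=
  ∀ u v : V, Relation.ReflTransGen (G.Adj G.E) u v

/-- `G` is 2-edge-connected: every edge lies in a cycle. -/
def TwoEdgeConnected (G : MGraph V α) : Prop :=
  ∀ e ∈ G.E, ∃ C : Finset α, G.IsCycle C ∧ e ∈ C

/-- `e` is a cut-edge of `G`: an edge contained in no cycle. -/
def IsCutEdge (G : MGraph V α) (e : α) : Prop :=
  e ∈ G.E ∧ ∀ C : Finset α, G.IsCycle C → e ∉ C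

/-- Deletion of the edge `e` from `G`. -/
def delete (G : MGraph V α) (e : α) : MGraph V α :=
  ⟨G.E.erase e, G.ends⟩

/-- Restriction of `G` to the edge set `X`. -/
def restrict (G : MGraph V α) (X : Finset α) : MGraph V α :=
  ⟨G.E ∩ X, G.ends⟩

/-- Contraction of the link `e` with endpoints `u, v`: the edge `e` is deleted
and the vertex `v` is identified with `u`. -/
def contractLink (G : MGraph V α) (e : α) (u v : V) : MGraph V α :=
  ⟨G.E.erase e, fun f => (G.ends f).map (fun w => if w = v then u else w)⟩

/-- `X` is a circuit of the contraction `M/e`, where `M` is the matroid with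
circuit collection `Circ`: the circuits of `M/e` are the minimal nonempty sets of
the form `C \ {e}` with `C` a circuit of `M`. -/
def ContractCircuit (Circ : Finset α → Prop) (e : α) (X : Finset α) : Prop :=
  (X.Nonempty ∧ ∃ C : Finset α, Circ C ∧ X = C.erase e) ∧
    ∀ Y ⊂ X, ¬ (Y.Nonempty ∧ ∃ C : Finset α, Circ C ∧ Y = C.erase e)

/-- `e` and `f` form a series pair: no cycle contains exactly one of them. -/
def SeriesPair (G : MGraph V α) (e f : α) : Prop :=
  e ∈ G.E ∧ f ∈ G.E ∧ ∀ C : Finset α, G.IsCycle C → (e ∈ C ↔ f ∈ C)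

/-- `X` is a series class of `G`: a maximal set of pairwise series edges. -/
def SeriesClass (G : MGraph V α) (X : Finset α) : Prop :=
  X ⊆ G.E ∧ X.Nonempty ∧ (∀ e ∈ X, ∀ f ∈ X, G.SeriesPair e f) ∧
    ∀ g ∈ G.E, (∀ e ∈ X, G.SeriesPair e g) → g ∈ X

/-- `G` is cosimple: no cut-edges and no nontrivial series classes. -/
def CoSimple (G : MGraph V α) : Prop :=
  (∀ e ∈ G.E, ¬ G.IsCutEdge e) ∧
    ∀ e ∈ G.E, ∀ f ∈ G.E, e ≠ f → ¬ G.SeriesPair e f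

/-- `e` and `f` are parallel edges. -/
def Parallel (G : MGraph V α) (e f : α) : Prop :=
  e ≠ f ∧ G.IsCycle {e, f}

/-- `P` is a parallel class of `G`: a maximal set of pairwise parallel non-loop
edges. -/
def ParallelClass (G : MGraph V α) (P : Finset α) : Prop :=
  P ⊆ G.E ∧ P.Nonempty ∧ (∀ e ∈ P, ¬ (G.ends e).IsDiag) ∧
    (∀ e ∈ P, ∀ f ∈ P, e ≠ f → G.Parallel e f) ∧
    ∀ g ∈ G.E, g ∉ P → ¬ (G.ends g).IsDiag → ∃ e ∈ P, ¬ G.Parallel e g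

/-- `P` is the edge set of a path of `G`: nonempty, acyclic, connected, with all
degrees at most two. -/
def IsPath (G : MGraph V α) (P : Finset α) : Prop :=
  P.Nonempty ∧ P ⊆ G.E ∧ (∀ C ⊆ P, ¬ G.IsCycle C) ∧
    (∀ v, G.VIn P v → G.degIn P v ≤ 2) ∧
    ∀ u v, G.VIn P u → G.VIn P v → Relation.ReflTransGen (G.Adj P) u v

/-- `P` is the edge set of a path of `G` with end-vertices `x` and `y`. -/
def PathBetween (G : MGraph V α) (P : Finset α) (x y : V) : Prop :=
  G.IsPath P ∧ x ≠ y ∧ G.degIn P x = 1 ∧ G.degIn P y = 1 ∧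
    ∀ v, G.degIn P v = 1 → v = x ∨ v = y

/-- `P` is the edge set of an ear of `G`: a path contained in a cycle, whose
internal vertices have degree two in `G` and whose end-vertices have degree at
least three in `G`. -/
def IsEar (G : MGraph V α) (P : Finset α) : Prop :=
  G.IsPath P ∧ (∀ v, G.degIn P v = 2 → G.degIn G.E v = 2) ∧
    (∀ v, G.degIn P v = 1 → 3 ≤ G.degIn G.E v) ∧
    ∃ C : Finset α, G.IsCycle C ∧ P ⊆ C

/-- `G` is a subdivision of `K_2^n`: two distinct branch vertices joined by `n`
internally disjoint paths whose edge sets partition `E(G)`. -/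
def IsK2nSub (G : MGraph V α) (n : ℕ) : Prop :=
  ∃ x y : V, x ≠ y ∧ ∃ P : Fin n → Finset α,
    (G.E = Finset.univ.biUnion fun i => P i) ∧
    (∀ i j : Fin n, i ≠ j → Disjoint (P i) (P j)) ∧
    (∀ i : Fin n, G.PathBetween (P i) x y) ∧
    (∀ i j : Fin n, i ≠ j → ∀ v, G.VIn (P i) v → G.VIn (P j) v → v = x ∨ v = y)

/-- `G` is a subdivision of `K_2^n` with the edge `e` lying on one of the `n`
paths. -/
def IsK2nSubThrough (G : MGraph V α) (n : ℕ) (e : α) : Prop :=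
  ∃ x y : V, x ≠ y ∧ ∃ P : Fin n → Finset α,
    (G.E = Finset.univ.biUnion fun i => P i) ∧
    (∀ i j : Fin n, i ≠ j → Disjoint (P i) (P j)) ∧
    (∀ i : Fin n, G.PathBetween (P i) x y) ∧
    (∀ i j : Fin n, i ≠ j → ∀ v, G.VIn (P i) v → G.VIn (P j) v → v = x ∨ v = y) ∧
    ∃ i : Fin n, e ∈ P i

/-- `T` is the edge set of a spanning tree of `G`. -/
def IsSpanningTree (G : MGraph V α) (T : Finset α) : Prop :=
  T ⊆ G.E ∧ (∀ C ⊆ T, ¬ G.IsCycle C) ∧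
    ∀ u v : V, Relation.ReflTransGen (G.Adj T) u v

end MGraph

namespace MGraph

variable {V : Type} {α : Type} [DecidableEq V] [DecidableEq α]

lemma degIn_mono (G : MGraph V α) {X Y : Finset α} (h : X ⊆ Y) (v : V) :
    G.degIn X v ≤ G.degIn Y v :=
  Finset.sum_le_sum_of_subset h

lemma degIn_union (G : MGraph V α) {X Y : Finset α} (h : Disjoint X Y) (v : V) :
    G.degIn (X ∪ Y) v = G.degIn X v + G.degIn Y v :=
  Finset.sum_union h

lemma one_le_degIn (G : MGraph V α) {X : Finset α} {e : α} {v : V}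
    (he : e ∈ X) (hv : v ∈ G.ends e) : 1 ≤ G.degIn X v := by
  refine Finset.single_le_sum (f := fun f =>
    (if G.ends f = s(v, v) then 2 else if v ∈ G.ends f then 1 else 0)) ?_ he |>.trans' ?_
  · intro i _; positivity
  · split <;> simp [hv]

lemma degIn_eq_zero (G : MGraph V α) {X : Finset α} {v : V} (h : ¬ G.VIn X v) :
    G.degIn X v = 0 := by
  refine Finset.sum_eq_zero fun e he => ?_
  have hv : v ∉ G.ends e := fun hv => h ⟨e, he, hv⟩
  have h1 : G.ends e ≠ s(v, v) := by
    intro hd; exact hv (hd ▸ Sym2.mem_mk_left v v)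
  simp [h1, hv]

lemma even_degIn_of_cycle (G : MGraph V α) {C : Finset α} (hC : G.IsCycle C) (v : V) :
    Even (G.degIn C v) := by
  by_cases h : G.VIn C v
  · rw [hC.2.2.1 v h]; exact even_two
  · rw [G.degIn_eq_zero h]; exact Even.zero

/-- A nonempty even-degree subgraph of a cycle is the whole cycle. -/
lemma eq_of_subset_cycle_even (G : MGraph V α) {D F : Finset α}
    (hD : G.IsCycle D) (hFD : F ⊆ D) (hF : F.Nonempty)
    (hev : ∀ v, G.VIn F v → Even (G.degIn F v)) : F = D := by
  have hVin : ∀ v, G.VIn F v → G.VIn D v := by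
    rintro v ⟨e, he, hv⟩; exact ⟨e, hFD he, hv⟩
  have hdeg2 : ∀ v, G.VIn F v → G.degIn F v = 2 := by
    intro v hv
    obtain ⟨e, he, hve⟩ := hv
    have h1 : 1 ≤ G.degIn F v := G.one_le_degIn he hve
    have h2 : G.degIn F v ≤ 2 := by
      have := G.degIn_mono hFD v
      rw [hD.2.2.1 v (hVin v ⟨e, he, hve⟩)] at this; exact this
    obtain ⟨r, hr⟩ := hev v ⟨e, he, hve⟩
    omega
  have hclosed : ∀ v, G.VIn F v → ∀ g ∈ D, v ∈ G.ends g → g ∈ F := by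
    intro v hv g hg hvg
    by_contra hgF
    have hsplit : G.degIn D v = G.degIn F v + G.degIn (D \ F) v := by
      rw [← G.degIn_union Finset.disjoint_sdiff v, Finset.union_sdiff_of_subset hFD]
    have hD2 : G.degIn D v = 2 := hD.2.2.1 v (hVin v hv)
    have hF2 : G.degIn F v = 2 := hdeg2 v hv
    have hg1 : 1 ≤ G.degIn (D \ F) v :=
      G.one_le_degIn (Finset.mem_sdiff.2 ⟨hg, hgF⟩) hvg
    omega
  have hVclosed : ∀ u w, G.VIn F u → G.Adj D u w → G.VIn F w := by
    rintro u w hu ⟨g, hg, hgeq⟩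
    have hug : u ∈ G.ends g := by rw [hgeq]; exact Sym2.mem_mk_left u w
    have hwg : w ∈ G.ends g := by rw [hgeq]; exact Sym2.mem_mk_right u w
    exact ⟨g, hclosed u hu g hg hug, hwg⟩
  have hreach : ∀ u w, G.VIn F u → Relation.ReflTransGen (G.Adj D) u w → G.VIn F w := by
    intro u w hu h
    induction h with
    | refl => exact hu
    | tail _ hadj ih => exact hVclosed _ _ ih hadj
  refine Finset.Subset.antisymm hFD fun g hg => ?_
  obtain ⟨f0, hf0⟩ := hF
  set v0 := (G.ends f0).out.1 with hv0
  have hv0f : v0 ∈ G.ends f0 := Sym2.out_fst_mem _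
  have hv0F : G.VIn F v0 := ⟨f0, hf0, hv0f⟩
  set u := (G.ends g).out.1 with hu
  have hug : u ∈ G.ends g := Sym2.out_fst_mem _
  have huD : G.VIn D u := ⟨g, hg, hug⟩
  have hconn := hD.2.2.2 v0 u (hVin v0 hv0F) huD
  exact hclosed u (hreach v0 u hv0F hconn) g hg hug

/-- The symmetric difference of two distinct cycles has even degree everywhere. -/
lemma even_degIn_symmDiff (G : MGraph V α) {E₁ E₂ : Finset α}
    (h₁ : G.IsCycle E₁) (h₂ : G.IsCycle E₂) (v : V) :
    Even (G.degIn ((E₁ \ E₂) ∪ (E₂ \ E₁)) v) := by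
  have hd1 : Disjoint (E₁ \ E₂) (E₁ ∩ E₂) :=
    Finset.sdiff_disjoint.mono_right Finset.inter_subset_right
  have hd2 : Disjoint (E₂ \ E₁) (E₂ ∩ E₁) :=
    Finset.sdiff_disjoint.mono_right Finset.inter_subset_right
  have hs1 : G.degIn E₁ v = G.degIn (E₁ \ E₂) v + G.degIn (E₁ ∩ E₂) v := by
    rw [← G.degIn_union hd1 v, Finset.sdiff_union_inter]
  have hs2 : G.degIn E₂ v = G.degIn (E₂ \ E₁) v + G.degIn (E₁ ∩ E₂) v := by
    rw [Finset.inter_comm, ← G.degIn_union hd2 v, Finset.sdiff_union_inter]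
  have hdd : Disjoint (E₁ \ E₂) (E₂ \ E₁) :=
    disjoint_sdiff_sdiff
  have hu : G.degIn ((E₁ \ E₂) ∪ (E₂ \ E₁)) v
      = G.degIn (E₁ \ E₂) v + G.degIn (E₂ \ E₁) v := G.degIn_union hdd v
  obtain ⟨r, hr⟩ := G.even_degIn_of_cycle h₁ v
  obtain ⟨s, hs⟩ := G.even_degIn_of_cycle h₂ v
  refine ⟨r + s - G.degIn (E₁ ∩ E₂) v, by omega⟩

lemma exists_min_subset {P : Finset α → Prop} :
    ∀ {X : Finset α}, P X → ∃ Z ⊆ X, P Z ∧ ∀ Y ⊂ Z, ¬ P Y := by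
  intro X
  induction X using Finset.strongInduction with
  | _ X ih =>
    intro hX
    by_cases h : ∃ Y ⊂ X, P Y
    · obtain ⟨Y, hYX, hPY⟩ := h
      obtain ⟨Z, hZY, hPZ, hmin⟩ := ih Y hYX hPY
      exact ⟨Z, hZY.trans hYX.subset, hPZ, hmin⟩
    · exact ⟨X, Finset.Subset.refl X, hX, fun Y hY hPY => h ⟨Y, hY, hPY⟩⟩

/-- If `e` lies in a cycle and there is another cycle, then `e` lies in a lift circuit. -/
lemma exists_liftCircuit_of_mem_cycle (G : MGraph V α) {C C' : Finset α} {e : α}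
    (hC : G.IsCycle C) (hC' : G.IsCycle C') (hne : C ≠ C') (he : e ∈ C) :
    ∃ Z, G.LiftCircuit Z ∧ e ∈ Z := by
  set P : Finset α → Prop :=
    fun Z => (∃ D, G.IsCycle D ∧ D ⊆ Z ∧ e ∈ D) ∧ G.TwoCycles Z with hPdef
  have hPX : P (C ∪ C') :=
    ⟨⟨C, hC, Finset.subset_union_left, he⟩,
      C, C', hC, hC', Finset.subset_union_left, Finset.subset_union_right, hne⟩
  obtain ⟨Z, hZsub, hPZ, hmin⟩ := exists_min_subset hPX
  obtain ⟨⟨D, hD, hDZ, heD⟩, hTCZ⟩ := hPZ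
  refine ⟨Z, ⟨?_, hTCZ, ?_⟩, hDZ heD⟩
  · exact hZsub.trans (Finset.union_subset hC.2.1 hC'.2.1)
  · intro Y hY hTCY
    obtain ⟨E₁, E₂, hE₁, hE₂, hE₁Y, hE₂Y, hEne⟩ := hTCY
    have hE₁Z : E₁ ⊆ Z := hE₁Y.trans hY.subset
    have hE₂Z : E₂ ⊆ Z := hE₂Y.trans hY.subset
    have he₁ : e ∉ E₁ := by
      intro h
      exact hmin Y hY ⟨⟨E₁, hE₁, hE₁Y, h⟩, E₁, E₂, hE₁, hE₂, hE₁Y, hE₂Y, hEne⟩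
    have he₂ : e ∉ E₂ := by
      intro h
      exact hmin Y hY ⟨⟨E₂, hE₂, hE₂Y, h⟩, E₁, E₂, hE₁, hE₂, hE₁Y, hE₂Y, hEne⟩
    have hkey : ∀ E', G.IsCycle E' → E' ⊆ Z → e ∉ E' → D ∪ E' = Z := by
      intro E' hE' hE'Z he'
      have hsub : D ∪ E' ⊆ Z := Finset.union_subset hDZ hE'Z
      by_contra hne'
      have hss : D ∪ E' ⊂ Z := Finset.ssubset_iff_subset_ne.2 ⟨hsub, hne'⟩
      refine hmin (D ∪ E') hss
        ⟨⟨D, hD, Finset.subset_union_left, heD⟩,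
          D, E', hD, hE', Finset.subset_union_left, Finset.subset_union_right, ?_⟩
      intro h; rw [h] at heD; exact he' heD
    have hX1 : D ∪ E₁ = Z := hkey E₁ hE₁ hE₁Z he₁
    have hX2 : D ∪ E₂ = Z := hkey E₂ hE₂ hE₂Z he₂
    set S := (E₁ \ E₂) ∪ (E₂ \ E₁) with hSdef
    have hSD : S ⊆ D := by
      intro g hg
      rcases Finset.mem_union.1 hg with hg | hg
      · rcases Finset.mem_sdiff.1 hg with ⟨hg1, hg2⟩
        have : g ∈ D ∪ E₂ := hX2 ▸ hE₁Z hg1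
        rcases Finset.mem_union.1 this with h | h
        · exact h
        · exact absurd h hg2
      · rcases Finset.mem_sdiff.1 hg with ⟨hg1, hg2⟩
        have : g ∈ D ∪ E₁ := hX1 ▸ hE₂Z hg1
        rcases Finset.mem_union.1 this with h | h
        · exact h
        · exact absurd h hg2
    have hSne : S.Nonempty := by
      by_contra h
      rw [Finset.not_nonempty_iff_eq_empty] at h
      have h1 : E₁ \ E₂ = ∅ := Finset.union_eq_empty.1 h |>.1
      have h2 : E₂ \ E₁ = ∅ := Finset.union_eq_empty.1 h |>.2
      exact hEne (Finset.Subset.antisymm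
        (Finset.sdiff_eq_empty_iff_subset.1 h1) (Finset.sdiff_eq_empty_iff_subset.1 h2))
    have hSeq : S = D :=
      G.eq_of_subset_cycle_even hD hSD hSne fun v _ => G.even_degIn_symmDiff hE₁ hE₂ v
    rw [← hSeq] at heD
    rcases Finset.mem_union.1 heD with h | h
    · exact he₁ (Finset.mem_sdiff.1 h).1
    · exact he₂ (Finset.mem_sdiff.1 h).1

/-- Under `TwoLiftCircuits`, `e` is a cut-edge iff `e` lies in no lift circuit. -/
lemma isCutEdge_iff_no_liftCircuit (G : MGraph V α) (h2 : G.TwoLiftCircuits) (e : α) :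
    G.IsCutEdge e ↔ e ∈ G.E ∧ ∀ X, G.LiftCircuit X → e ∉ X := by
  constructor
  · rintro ⟨heE, hcut⟩
    refine ⟨heE, fun X hX heX => ?_⟩
    obtain ⟨hXE, ⟨C₁, C₂, hC₁, hC₂, hC₁X, hC₂X, hCne⟩, hXmin⟩ := hX
    have hC₁e : C₁ ⊆ X.erase e := fun g hg =>
      Finset.mem_erase.2 ⟨fun h => hcut C₁ hC₁ (h ▸ hg), hC₁X hg⟩
    have hC₂e : C₂ ⊆ X.erase e := fun g hg =>
      Finset.mem_erase.2 ⟨fun h => hcut C₂ hC₂ (h ▸ hg), hC₂X hg⟩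
    exact hXmin (X.erase e) (Finset.erase_ssubset heX)
      ⟨C₁, C₂, hC₁, hC₂, hC₁e, hC₂e, hCne⟩
  · rintro ⟨heE, hno⟩
    refine ⟨heE, fun C hC heC => ?_⟩
    obtain ⟨X, Y, hX, hY, _⟩ := h2
    obtain ⟨_, ⟨C₁, C₂, hC₁, hC₂, _, _, hCne⟩, _⟩ := hX
    obtain ⟨C', hC', hne⟩ : ∃ C', G.IsCycle C' ∧ C ≠ C' := by
      by_cases h : C = C₁
      · exact ⟨C₂, hC₂, h ▸ hCne⟩
      · exact ⟨C₁, hC₁, h⟩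
    obtain ⟨Z, hZ, heZ⟩ := G.exists_liftCircuit_of_mem_cycle hC hC' hne heC
    exact hno Z hZ heZ

end MGraph

/-- if `L(G₁) = L(G₂)` and each `L(Gᵢ)` has at least two circuits,
then cut-edges of `G₁` and `G₂` coincide. -/
theorem cutEdge_iff_of_liftEq
    {V₁ V₂ α : Type} [DecidableEq V₁] [DecidableEq V₂] [DecidableEq α]
    (G₁ : MGraph V₁ α) (G₂ : MGraph V₂ α)
    (hL : G₁.LiftEq G₂) (h₁ : G₁.TwoLiftCircuits) (h₂ : G₂.TwoLiftCircuits) :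
    ∀ e : α, G₁.IsCutEdge e ↔ G₂.IsCutEdge e := by
  intro e
  rw [G₁.isCutEdge_iff_no_liftCircuit h₁ e, G₂.isCutEdge_iff_no_liftCircuit h₂ e,
    hL.1]
  constructor
  · rintro ⟨heE, hno⟩
    exact ⟨heE, fun X hX => hno X ((hL.2 X).2 hX)⟩
  · rintro ⟨heE, hno⟩
    exact ⟨heE, fun X hX => hno X ((hL.2 X).1 hX)⟩
end

section
/- For any graph G and any loop e of G, the contraction of e in the bicircular lift matroid equals the graphic (cycle) matroid of G \ e: L(G)/e = M(G \ e). -/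
open Finset

/-!
A loop `e` is a cycle on its own, and a cycle through a loop is just that loop, since the loop
already uses up the degree of its vertex. Hence for every cycle `D` of `G \ e` the set `D + e`
contains exactly the two cycles `{e}` and `D`, so it is a circuit of `L(G)` and `D` is a set of
the form `C \ e` for a circuit `C`; conversely every circuit of `L(G)` contains a cycle avoiding
`e`. Since no cycle properly contains another, the minimal nonempty sets `C \ e` are exactly the
cycles of `G \ e`.
-/

theorem Finset.ssubset_minimal_iff_of_antichain {α : Type*} {F A : Finset α → Prop}
    (hAF : ∀ D, A D → F D) (hFA : ∀ X, F X → ∃ D, A D ∧ D ⊆ X)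
    (hA : ∀ D D', A D → A D' → D ⊆ D' → D = D') (X : Finset α) :
    (F X ∧ ∀ Y ⊂ X, ¬ F Y) ↔ A X := by
  constructor
  · rintro ⟨hX, hmin⟩
    obtain ⟨D, hD, hDX⟩ := hFA X hX
    obtain rfl : D = X := hDX.eq_of_not_ssubset fun hlt => hmin D hlt (hAF D hD)
    exact hD
  · refine fun hX => ⟨hAF X hX, fun Y hYX hY => ?_⟩
    obtain ⟨D, hD, hDY⟩ := hFA Y hY
    obtain rfl : D = X := hA D X hD hX (hDY.trans hYX.subset)
    exact hYX.not_subset hDY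

namespace MGraph

variable {V α : Type} [DecidableEq V] {G : MGraph V α} {C D X Y : Finset α} {e f : α} {v w : V}

theorem isCycle_singleton_of_loop (hfE : f ∈ G.E) (hf : G.ends f = s(w, w)) :
    G.IsCycle {f} := by
  have hvert : ∀ v, G.VIn {f} v → v = w := by
    rintro v ⟨g, hg, hvg⟩
    rw [Finset.mem_singleton.mp hg, hf, Sym2.mem_iff, or_self] at hvg
    exact hvg
  refine ⟨Finset.singleton_nonempty f, Finset.singleton_subset_iff.mpr hfE, ?_, ?_⟩
  · intro v hv
    rw [hvert v hv]
    simp [degIn, hf]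
  · intro u v hu hv
    rw [hvert u hu, hvert v hv]

variable [DecidableEq α]

theorem notMem_ends_of_degIn_eq (hXY : X ⊆ Y) (hdeg : G.degIn Y v = G.degIn X v)
    (hfY : f ∈ Y) (hfX : f ∉ X) : v ∉ G.ends f := by
  unfold degIn at hdeg
  rw [← Finset.sum_sdiff hXY, add_eq_right] at hdeg
  have hf := Finset.sum_eq_zero_iff.mp hdeg f (Finset.mem_sdiff.mpr ⟨hfY, hfX⟩)
  intro hv
  simp only [hv, if_true] at hf
  split_ifs at hf

theorem isCycle_delete_iff : (G.delete e).IsCycle X ↔ G.IsCycle X ∧ e ∉ X := by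
  unfold IsCycle delete VIn degIn Adj
  simp only [Finset.subset_erase]
  tauto

theorem IsCycle.eq_of_subset (hC : G.IsCycle C) (hD : G.IsCycle D) (hDC : D ⊆ C) : D = C := by
  -- A vertex of `D` already has degree two in `D`, so `C` has no further edges at it.
  have hclosed : ∀ v, G.VIn D v → ∀ g ∈ C, v ∈ G.ends g → g ∈ D := by
    intro v hv g hgC hvg
    by_contra hgD
    refine notMem_ends_of_degIn_eq hDC ?_ hgC hgD hvg
    rw [hC.2.2.1 v ⟨g, hgC, hvg⟩, hD.2.2.1 v hv]
  have hreach : ∀ u z, G.VIn D u → Relation.ReflTransGen (G.Adj C) u z → G.VIn D z := by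
    intro u z hu huz
    induction huz with
    | refl => exact hu
    | tail _ hadj ih =>
      obtain ⟨g, hgC, hg⟩ := hadj
      have hgD := hclosed _ ih g hgC (by rw [hg]; exact Sym2.mem_mk_left _ _)
      exact ⟨g, hgD, by rw [hg]; exact Sym2.mem_mk_right _ _⟩
  refine hDC.antisymm fun g hgC => ?_
  obtain ⟨d, hdD⟩ := hD.1
  have hdu : G.VIn D (G.ends d).out.1 := ⟨d, hdD, Sym2.out_fst_mem _⟩
  have hgu : G.VIn C (G.ends g).out.1 := ⟨g, hgC, Sym2.out_fst_mem _⟩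
  have hgD := hreach _ _ hdu (hC.2.2.2 _ _ ⟨d, hDC hdD, Sym2.out_fst_mem _⟩ hgu)
  exact hclosed _ hgD g hgC (Sym2.out_fst_mem _)

theorem IsCycle.eq_singleton_of_loop (hC : G.IsCycle C) (hfC : f ∈ C)
    (hf : G.ends f = s(w, w)) : C = {f} :=
  (hC.eq_of_subset (isCycle_singleton_of_loop (hC.2.1 hfC) hf)
    (Finset.singleton_subset_iff.mpr hfC)).symm

theorem TwoCycles.exists_isCycle_notMem (hX : G.TwoCycles X) (he : G.ends e = s(w, w)) :
    ∃ D, G.IsCycle D ∧ e ∉ D ∧ D ⊆ X := by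
  obtain ⟨C₁, C₂, hC₁, hC₂, hC₁X, hC₂X, hne⟩ := hX
  by_cases he₁ : e ∈ C₁
  · refine ⟨C₂, hC₂, fun he₂ => hne ?_, hC₂X⟩
    rw [hC₁.eq_singleton_of_loop he₁ he, hC₂.eq_singleton_of_loop he₂ he]
  · exact ⟨C₁, hC₁, he₁, hC₁X⟩

theorem IsCycle.eq_or_eq_of_subset_insert_loop (hC : G.IsCycle C) (hD : G.IsCycle D)
    (he : G.ends e = s(w, w)) (hCD : C ⊆ insert e D) : C = {e} ∨ C = D := by
  by_cases heC : e ∈ C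
  · exact Or.inl (hC.eq_singleton_of_loop heC he)
  · exact Or.inr (hD.eq_of_subset hC ((Finset.subset_insert_iff_of_notMem heC).mp hCD))

theorem liftCircuit_insert_loop (heE : e ∈ G.E) (he : G.ends e = s(w, w))
    (hD : G.IsCycle D) (heD : e ∉ D) : G.LiftCircuit (insert e D) := by
  refine ⟨Finset.insert_subset heE hD.2.1, ⟨{e}, D, isCycle_singleton_of_loop heE he, hD,
    by simp, Finset.subset_insert e D, fun h => heD (h ▸ Finset.mem_singleton_self e)⟩, ?_⟩
  rintro Y hY ⟨C₁, C₂, hC₁, hC₂, hC₁Y, hC₂Y, hne⟩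
  have hcover : insert e D ⊆ Y := by
    rcases hC₁.eq_or_eq_of_subset_insert_loop hD he (hC₁Y.trans hY.subset) with rfl | rfl <;>
      rcases hC₂.eq_or_eq_of_subset_insert_loop hD he (hC₂Y.trans hY.subset) with rfl | rfl
    · exact absurd rfl hne
    · exact Finset.insert_subset (hC₁Y (Finset.mem_singleton_self e)) hC₂Y
    · exact Finset.insert_subset (hC₂Y (Finset.mem_singleton_self e)) hC₁Y
    · exact absurd rfl hne
  exact hY.not_subset hcover

end MGraph

/-- for a loop `e` of `G`, `L(G)/e = M(G \ e)`: the circuits of the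
contraction of `L(G)` by `e` are exactly the cycles of `G \ e`. -/
theorem lift_contract_loop_eq_graphic
    {V α : Type} [DecidableEq V] [DecidableEq α] (G : MGraph V α)
    (e : α) (he : e ∈ G.E) (hloop : (G.ends e).IsDiag) :
    ∀ X : Finset α,
      MGraph.ContractCircuit G.LiftCircuit e X ↔ (G.delete e).IsCycle X := by
  obtain ⟨w, hw⟩ : ∃ w, G.ends e = s(w, w) := ⟨_, (Sym2.diag_diagElem hloop).symm⟩
  intro X
  rw [MGraph.isCycle_delete_iff]
  refine Finset.ssubset_minimal_iff_of_antichain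
    (F := fun Y => Y.Nonempty ∧ ∃ C, G.LiftCircuit C ∧ Y = C.erase e)
    (A := fun D => G.IsCycle D ∧ e ∉ D) ?_ ?_ ?_ X
  · rintro D ⟨hD, heD⟩
    exact ⟨hD.1, insert e D, MGraph.liftCircuit_insert_loop he hw hD heD,
      (Finset.erase_insert heD).symm⟩
  · rintro _ ⟨-, C, hC, rfl⟩
    obtain ⟨D, hD, heD, hDC⟩ := hC.2.1.exists_isCycle_notMem hw
    exact ⟨D, ⟨hD, heD⟩, Finset.subset_erase.mpr ⟨hDC, heD⟩⟩
  · exact fun D D' hD hD' hDD' => hD'.1.eq_of_subset hD.1 hDD'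
end

section
/- Let G1, G2 be graphs on the same edge set with L(G1) = L(G2), and suppose some edge e is a loop in both G1 and G2. Then G1 and G2 are 2-isomorphic. -/
open Finset

namespace MGraphAux

open MGraph

variable {V α : Type} [DecidableEq V] [DecidableEq α]

lemma sym2_cases (s : Sym2 V) : ∃ a b : V, s = s(a, b) := by
  induction s using Sym2.ind with
  | _ a b => exact ⟨a, b, rfl⟩

lemma vIn_mono {G : MGraph V α} {X Y : Finset α} (h : X ⊆ Y) {v : V} :
    G.VIn X v → G.VIn Y v := fun ⟨f, hf, hv⟩ => ⟨f, h hf, hv⟩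

lemma degIn_mono (G : MGraph V α) {X Y : Finset α} (h : X ⊆ Y) (v : V) :
    G.degIn X v ≤ G.degIn Y v :=
  Finset.sum_le_sum_of_subset_of_nonneg h (fun _ _ _ => Nat.zero_le _)

/-- An edge of a cycle `C` incident to a vertex of a subcycle `C' ⊆ C` lies in `C'`. -/
lemma closure_edge {G : MGraph V α} {C C' : Finset α} (hC : G.IsCycle C)
    (hC' : G.IsCycle C') (hsub : C' ⊆ C) {v : V} (hv : G.VIn C' v)
    {f : α} (hfC : f ∈ C) (hvf : v ∈ G.ends f) : f ∈ C' := by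
  by_contra hfC'
  have h2' : G.degIn C' v = 2 := hC'.2.2.1 v hv
  have h2 : G.degIn C v = 2 := hC.2.2.1 v (vIn_mono hsub hv)
  have hins : insert f C' ⊆ C := Finset.insert_subset hfC hsub
  have hmono := degIn_mono G hins v
  rw [MGraph.degIn, Finset.sum_insert hfC'] at hmono
  have hpos : 1 ≤ (if G.ends f = s(v, v) then 2 else if v ∈ G.ends f then 1 else 0) := by
    rcases em (G.ends f = s(v, v)) with h | h <;> simp [h, hvf]
  have : G.degIn C' v = ∑ e ∈ C', (if G.ends e = s(v, v) then 2
      else if v ∈ G.ends e then 1 else 0) := rfl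
  omega

/-- A cycle contained in a cycle equals it. -/
lemma cycle_subset {G : MGraph V α} {C C' : Finset α} (hC : G.IsCycle C)
    (hC' : G.IsCycle C') (hsub : C' ⊆ C) : C' = C := by
  apply Finset.Subset.antisymm hsub
  intro f hfC
  -- pick a vertex of C'
  obtain ⟨g₀, hg₀⟩ := hC'.1
  obtain ⟨w, hw⟩ : ∃ w, w ∈ G.ends g₀ := by
    obtain ⟨a, b, hab⟩ := sym2_cases (G.ends g₀)
    exact ⟨a, hab ▸ Sym2.mem_mk_left a b⟩
  have hwC' : G.VIn C' w := ⟨g₀, hg₀, hw⟩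
  -- pick a vertex of f
  obtain ⟨u, hu⟩ : ∃ u, u ∈ G.ends f := by
    obtain ⟨a, b, hab⟩ := sym2_cases (G.ends f)
    exact ⟨a, hab ▸ Sym2.mem_mk_left a b⟩
  have huC : G.VIn C u := ⟨f, hfC, hu⟩
  have hwalk := hC.2.2.2 w u (vIn_mono hsub hwC') huC
  -- show every vertex reachable from w is a vertex of C'
  have huC' : G.VIn C' u := by
    clear hu hw hg₀ huC
    induction hwalk with
    | refl => exact hwC'
    | @tail b c _ hbc ih =>
      obtain ⟨g, hgC, hg⟩ := hbc
      have hb : b ∈ G.ends g := by rw [hg]; exact Sym2.mem_mk_left _ _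
      have hgC' := closure_edge hC hC' hsub ih hgC hb
      exact ⟨g, hgC', by rw [hg]; exact Sym2.mem_mk_right _ _⟩
  exact closure_edge hC hC' hsub huC' hfC hu

/-- A loop is a cycle. -/
lemma loop_cycle (G : MGraph V α) {e : α} (he : e ∈ G.E)
    (hl : (G.ends e).IsDiag) : G.IsCycle {e} := by
  obtain ⟨u, hu⟩ : ∃ u, G.ends e = s(u, u) := by
    obtain ⟨a, b, hab⟩ := sym2_cases (G.ends e)
    rw [hab] at hl
    exact ⟨a, by rw [hab, Sym2.mk_isDiag_iff.mp hl]⟩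
  refine ⟨⟨e, Finset.mem_singleton_self e⟩, Finset.singleton_subset_iff.mpr he, ?_, ?_⟩
  · intro v ⟨f, hf, hv⟩
    rw [Finset.mem_singleton] at hf
    subst hf
    rw [hu, Sym2.mem_iff] at hv
    have hv' : v = u := by tauto
    subst hv'
    simp [MGraph.degIn, hu]
  · rintro x y ⟨f, hf, hx⟩ ⟨g, hg, hy⟩
    rw [Finset.mem_singleton] at hf hg
    subst hf; subst hg
    rw [hu, Sym2.mem_iff] at hx hy
    have hx' : x = u := by tauto
    have hy' : y = u := by tauto
    rw [hx', hy']

/-- A cycle containing a loop `e` is `{e}`. -/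
lemma cycle_of_mem_loop {G : MGraph V α} {C : Finset α} {e : α} (he : e ∈ G.E)
    (hl : (G.ends e).IsDiag) (hC : G.IsCycle C) (heC : e ∈ C) : C = {e} :=
  (cycle_subset hC (loop_cycle G he hl) (Finset.singleton_subset_iff.mpr heC)).symm

lemma liftCircuit_insert_loop {G : MGraph V α} {e : α} (he : e ∈ G.E)
    (hl : (G.ends e).IsDiag) {C : Finset α} (hC : G.IsCycle C) (heC : e ∉ C) :
    G.LiftCircuit (insert e C) := by
  refine ⟨Finset.insert_subset he hC.2.1, ⟨{e}, C, loop_cycle G he hl, hC,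
    Finset.singleton_subset_iff.mpr (Finset.mem_insert_self e C),
    Finset.subset_insert e C, fun h => heC (h ▸ Finset.mem_singleton_self e)⟩, ?_⟩
  rintro Y hY ⟨D₁, D₂, hD₁, hD₂, hD₁Y, hD₂Y, hne⟩
  have key : ∀ D : Finset α, G.IsCycle D → D ⊆ Y → D = {e} ∨ D = C := by
    intro D hD hDY
    by_cases heD : e ∈ D
    · exact Or.inl (cycle_of_mem_loop he hl hD heD)
    · right
      have hDC : D ⊆ C := fun x hx => by
        rcases Finset.mem_insert.mp (hY.subset (hDY hx)) with h | h
        · exact absurd (h ▸ hx) heD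
        · exact h
      exact cycle_subset hC hD hDC
  rcases key D₁ hD₁ hD₁Y with h1 | h1 <;> rcases key D₂ hD₂ hD₂Y with h2 | h2
  · exact hne (h1.trans h2.symm)
  · exact hY.not_subset (Finset.insert_subset (hD₁Y (h1 ▸ Finset.mem_singleton_self e))
      (h2 ▸ hD₂Y))
  · exact hY.not_subset (Finset.insert_subset (hD₂Y (h2 ▸ Finset.mem_singleton_self e))
      (h1 ▸ hD₁Y))
  · exact hne (h1.trans h2.symm)

lemma cycle_of_liftCircuit_insert_loop {G : MGraph V α} {e : α} (he : e ∈ G.E)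
    (hl : (G.ends e).IsDiag) {C : Finset α} (heC : e ∉ C)
    (hX : G.LiftCircuit (insert e C)) : G.IsCycle C := by
  obtain ⟨hXE, ⟨D₁, D₂, hD₁, hD₂, hD₁X, hD₂X, hne⟩, hmin⟩ := hX
  -- at least one of D₁, D₂ avoids e
  obtain ⟨D, hD, hDX, heD⟩ : ∃ D, G.IsCycle D ∧ D ⊆ insert e C ∧ e ∉ D := by
    by_cases h1 : e ∈ D₁
    · by_cases h2 : e ∈ D₂
      · exact absurd ((cycle_of_mem_loop he hl hD₁ h1).trans
          (cycle_of_mem_loop he hl hD₂ h2).symm) hne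
      · exact ⟨D₂, hD₂, hD₂X, h2⟩
    · exact ⟨D₁, hD₁, hD₁X, h1⟩
  have hDC : D ⊆ C := fun x hx => by
    rcases Finset.mem_insert.mp (hDX hx) with h | h
    · exact absurd (h ▸ hx) heD
    · exact h
  -- insert e D contains two cycles, so by minimality it equals insert e C
  have htwo : G.TwoCycles (insert e D) :=
    ⟨{e}, D, loop_cycle G he hl, hD,
      Finset.singleton_subset_iff.mpr (Finset.mem_insert_self e D),
      Finset.subset_insert e D, fun h => heD (h ▸ Finset.mem_singleton_self e)⟩
  have hsub : insert e D ⊆ insert e C := Finset.insert_subset_insert e hDC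
  have heq : insert e D = insert e C := by
    by_contra hne'
    exact hmin (insert e D) (lt_of_le_of_ne hsub hne') htwo
  have hCD : C ⊆ D := fun x hx => by
    rcases Finset.mem_insert.mp (heq ▸ Finset.mem_insert_of_mem hx :
        x ∈ insert e D) with h | h
    · exact absurd (h ▸ hx) heC
    · exact h
  rwa [Finset.Subset.antisymm hDC hCD] at hD

lemma cycle_imp {V₁ V₂ : Type} [DecidableEq V₁] [DecidableEq V₂]
    {G₁ : MGraph V₁ α} {G₂ : MGraph V₂ α} (hL : G₁.LiftEq G₂)
    {e : α} (he₁ : e ∈ G₁.E) (he₂ : e ∈ G₂.E)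
    (hl₁ : (G₁.ends e).IsDiag) (hl₂ : (G₂.ends e).IsDiag)
    {C : Finset α} (hC : G₁.IsCycle C) : G₂.IsCycle C := by
  by_cases heC : e ∈ C
  · rw [cycle_of_mem_loop he₁ hl₁ hC heC]
    exact loop_cycle G₂ he₂ hl₂
  · exact cycle_of_liftCircuit_insert_loop he₂ hl₂ heC
      ((hL.2 _).mp (liftCircuit_insert_loop he₁ hl₁ hC heC))

end MGraphAux

/-- if `L(G₁) = L(G₂)` and `e` is a loop of both graphs, then `G₁`
and `G₂` are 2-isomorphic. -/
theorem twoIso_of_liftEq_common_loop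
    {V₁ V₂ α : Type} [DecidableEq V₁] [DecidableEq V₂] [DecidableEq α]
    (G₁ : MGraph V₁ α) (G₂ : MGraph V₂ α) (hL : G₁.LiftEq G₂)
    (e : α) (he₁ : e ∈ G₁.E) (he₂ : e ∈ G₂.E)
    (hloop₁ : (G₁.ends e).IsDiag) (hloop₂ : (G₂.ends e).IsDiag) :
    G₁.TwoIso G₂ := by
  refine ⟨hL.1, fun X => ⟨fun h => MGraphAux.cycle_imp hL he₁ he₂ hloop₁ hloop₂ h,
    fun h => MGraphAux.cycle_imp ⟨hL.1.symm, fun Y => (hL.2 Y).symm⟩ he₂ he₁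
      hloop₂ hloop₁ h⟩⟩
end

section
/- Let G1 and G2 be connected loopless graphs with the same edge set and the same number of vertices. If for every edge e the contracted graphs G1/e and G2/e are 2-isomorphic, then G1 and G2 are 2-isomorphic. -/
open Finset

/-!
If `C` is a cycle of `G₁` through the link `e = uv`, then `C - e` is a cycle of `G₁/e`, hence of
`G₂/e`. A cycle of `G₂/e` lifts to `G₂` either unchanged (when one end of `e` is untouched, the
identification of `v` with `u` is a relabelling on it) or with `e` put back (when both ends meet it
once each). So `C` or `C - e` is a cycle of `G₂`; in the second case induction on `|C|` makes
`C - e` a cycle of `G₁`, impossible as no cycle properly contains another.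
-/

namespace MGraph

variable {V W α : Type}

lemma exists_ends_eq_mk (G : MGraph V α) (f : α) : ∃ a b, G.ends f = s(a, b) :=
  Sym2.ind (f := fun z => ∃ a b, z = s(a, b)) (fun a b => ⟨a, b, rfl⟩) (G.ends f)

lemma reach_of_mem_ends {G : MGraph V α} {X : Finset α} {f : α} (hf : f ∈ X) {a b : V}
    (ha : a ∈ G.ends f) (hb : b ∈ G.ends f) : Relation.ReflTransGen (G.Adj X) a b := by
  obtain ⟨c, hac⟩ := Sym2.mem_iff_exists.1 ha
  rcases Sym2.mem_iff.1 (hac ▸ hb) with rfl | rfl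
  · exact .refl
  · exact .single ⟨f, hf, hac⟩

instance (G : MGraph V α) (X : Finset α) : Std.Symm (G.Adj X) where
  symm _ _ := fun ⟨f, hf, h⟩ => ⟨f, hf, h.trans Sym2.eq_swap⟩

section Relabel

variable {G : MGraph V α} {H : MGraph W α} {σ : V → W} {X : Finset α}

lemma exists_vIn_of_ends_eq_map (hends : ∀ f ∈ X, H.ends f = (G.ends f).map σ) {w : W}
    (hw : H.VIn X w) : ∃ x, G.VIn X x ∧ σ x = w := by
  obtain ⟨f, hf, hwf⟩ := hw
  obtain ⟨x, hxf, rfl⟩ := Sym2.mem_map.1 (hends f hf ▸ hwf)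
  exact ⟨x, ⟨f, hf, hxf⟩, rfl⟩

lemma adj_of_ends_eq_map (hends : ∀ f ∈ X, H.ends f = (G.ends f).map σ) {a b : V}
    (hab : G.Adj X a b) : H.Adj X (σ a) (σ b) := by
  obtain ⟨f, hf, hfab⟩ := hab
  exact ⟨f, hf, by rw [hends f hf, hfab, Sym2.map_mk]⟩

end Relabel

variable [DecidableEq V] [DecidableEq W]

def endMult (z : Sym2 V) (w : V) : ℕ :=
  if z = s(w, w) then 2 else if w ∈ z then 1 else 0

lemma degIn_eq_sum_endMult (G : MGraph V α) (X : Finset α) (w : V) :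
    G.degIn X w = ∑ f ∈ X, endMult (G.ends f) w := rfl

lemma endMult_mk (a b w : V) :
    endMult s(a, b) w = (if a = w then 1 else 0) + (if b = w then 1 else 0) := by
  by_cases ha : a = w <;> by_cases hb : b = w <;> subst_vars <;>
    simp [endMult, Sym2.mem_iff, *, eq_comm]

lemma endMult_pos_iff {z : Sym2 V} {w : V} : 0 < endMult z w ↔ w ∈ z := by
  induction z using Sym2.ind with
  | h a b =>
    rw [endMult_mk, Sym2.mem_iff]
    split_ifs <;> grind

lemma endMult_mk_left {u v : V} (huv : u ≠ v) : endMult s(u, v) u = 1 := by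
  simp [endMult_mk, huv.symm]

lemma endMult_mk_right {u v : V} (huv : u ≠ v) : endMult s(u, v) v = 1 := by
  simp [endMult_mk, huv]

lemma endMult_mk_of_ne {u v w : V} (hwu : w ≠ u) (hwv : w ≠ v) : endMult s(u, v) w = 0 := by
  simp [endMult_mk, hwu.symm, hwv.symm]

lemma vIn_iff_degIn_pos {G : MGraph V α} {X : Finset α} {w : V} :
    G.VIn X w ↔ 0 < G.degIn X w := by
  simp only [VIn, degIn_eq_sum_endMult, Finset.sum_pos_iff, endMult_pos_iff]

lemma endMult_map_of_injective {σ : V → W} (hσ : σ.Injective) (z : Sym2 V) (w : V) :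
    endMult (z.map σ) (σ w) = endMult z w := by
  induction z using Sym2.ind with
  | h a b => simp only [Sym2.map_mk, endMult_mk, hσ.eq_iff]

section Relabel

variable {G : MGraph V α} {H : MGraph W α} {σ : V → W} {X : Finset α}

lemma degIn_of_ends_eq_map (hends : ∀ f ∈ X, H.ends f = (G.ends f).map σ) (hσ : σ.Injective)
    (x : V) : H.degIn X (σ x) = G.degIn X x := by
  simp only [degIn_eq_sum_endMult]
  exact Finset.sum_congr rfl fun f hf => hends f hf ▸ endMult_map_of_injective hσ _ x

lemma IsCycle.of_ends_eq_map {C : Finset α} (hC : G.IsCycle C)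
    (hends : ∀ f ∈ C, H.ends f = (G.ends f).map σ) (hσ : σ.Injective) (hCE : C ⊆ H.E) :
    H.IsCycle C := by
  obtain ⟨hne, -, hdeg, hconn⟩ := hC
  refine ⟨hne, hCE, fun w hw => ?_, fun w₁ w₂ hw₁ hw₂ => ?_⟩
  · obtain ⟨x, hx, rfl⟩ := exists_vIn_of_ends_eq_map hends hw
    rw [degIn_of_ends_eq_map hends hσ, hdeg x hx]
  · obtain ⟨x, hx, rfl⟩ := exists_vIn_of_ends_eq_map hends hw₁
    obtain ⟨y, hy, rfl⟩ := exists_vIn_of_ends_eq_map hends hw₂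
    exact Relation.ReflTransGen.lift σ (fun _ _ => adj_of_ends_eq_map hends) _ _
      (hconn x y hx hy)

end Relabel

lemma IsCycle.eq_of_subset_s7 {G : MGraph V α} {C C' : Finset α} (hC : G.IsCycle C)
    (hC' : G.IsCycle C') (hsub : C' ⊆ C) : C' = C := by
  obtain ⟨-, -, hdeg, hconn⟩ := hC
  obtain ⟨⟨f₀, hf₀⟩, -, hdeg', -⟩ := hC'
  -- a vertex of `C'` already has its full degree `2` inside `C'`
  have hclosed : ∀ w, G.VIn C' w → ∀ g ∈ C, w ∈ G.ends g → g ∈ C' := by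
    intro w hw g hg hwg
    by_contra hgC'
    have hlt : G.degIn C' w < G.degIn C w :=
      Finset.sum_lt_sum_of_subset hsub hg hgC' (endMult_pos_iff.2 hwg) fun _ _ _ => Nat.zero_le _
    obtain ⟨f, hf, hwf⟩ := hw
    rw [hdeg' w ⟨f, hf, hwf⟩, hdeg w ⟨f, hsub hf, hwf⟩] at hlt
    exact lt_irrefl _ hlt
  obtain ⟨x₀, hx₀⟩ : ∃ x, x ∈ G.ends f₀ := ⟨_, Sym2.out_fst_mem _⟩
  have hreach : ∀ y, Relation.ReflTransGen (G.Adj C) x₀ y → G.VIn C' y := by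
    intro y hy
    induction hy with
    | refl => exact ⟨f₀, hf₀, hx₀⟩
    | tail _ hyz ih =>
      obtain ⟨g, hg, hgyz⟩ := hyz
      exact ⟨g, hclosed _ ih g hg (hgyz ▸ Sym2.mem_mk_left _ _), hgyz ▸ Sym2.mem_mk_right _ _⟩
  refine hsub.antisymm fun g hg => ?_
  have hy := Sym2.out_fst_mem (G.ends g)
  exact hclosed _ (hreach _ (hconn _ _ ⟨f₀, hsub hf₀, hx₀⟩ ⟨g, hg, hy⟩)) g hg hy

def identify (u v : V) (w : V) : V := if w = v then u else w

lemma identify_of_ne {u v w : V} (hw : w ≠ v) : identify u v w = w := if_neg hw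

lemma identify_eq_left_iff {u v w : V} : identify u v w = u ↔ w = u ∨ w = v := by
  unfold identify; split_ifs <;> grind

lemma contractLink_ends (G : MGraph V α) [DecidableEq α] (e : α) (u v : V) (f : α) :
    (G.contractLink e u v).ends f = (G.ends f).map (identify u v) := rfl

lemma endMult_map_identify_left {u v : V} (huv : u ≠ v) (z : Sym2 V) :
    endMult (z.map (identify u v)) u = endMult z u + endMult z v := by
  induction z using Sym2.ind with
  | h a b =>
    simp only [Sym2.map_mk, endMult_mk, identify_eq_left_iff]
    split_ifs <;> grind

lemma endMult_map_identify_of_ne {u v w : V} (hwu : w ≠ u) (hwv : w ≠ v) (z : Sym2 V) :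
    endMult (z.map (identify u v)) w = endMult z w := by
  induction z using Sym2.ind with
  | h a b =>
    simp only [Sym2.map_mk, endMult_mk, identify]
    split_ifs <;> grind

section Contract

variable [DecidableEq α] {G : MGraph V α} {e : α} {u v : V}

lemma degIn_contractLink_left (huv : u ≠ v) (X : Finset α) :
    (G.contractLink e u v).degIn X u = G.degIn X u + G.degIn X v := by
  simp only [degIn_eq_sum_endMult, contractLink_ends, endMult_map_identify_left huv,
    Finset.sum_add_distrib]

lemma degIn_contractLink_of_ne {w : V} (hwu : w ≠ u) (hwv : w ≠ v) (X : Finset α) :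
    (G.contractLink e u v).degIn X w = G.degIn X w := by
  simp only [degIn_eq_sum_endMult, contractLink_ends, endMult_map_identify_of_ne hwu hwv]

lemma IsCycle.contractLink_erase {C : Finset α} (hC : G.IsCycle C) (he : e ∈ C)
    (hends : G.ends e = s(u, v)) (huv : u ≠ v) : (G.contractLink e u v).IsCycle (C.erase e) := by
  obtain ⟨-, hCE, hdeg, hconn⟩ := hC
  have hdeg_erase : ∀ w, G.degIn C w = G.degIn (C.erase e) w + endMult s(u, v) w := fun w => by
    rw [degIn_eq_sum_endMult, ← Finset.add_sum_erase _ _ he, hends, add_comm]; rfl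
  have hu : G.degIn (C.erase e) u = 1 := by
    have := hdeg_erase u
    rw [hdeg u ⟨e, he, hends ▸ Sym2.mem_mk_left u v⟩, endMult_mk_left huv] at this
    omega
  have hv : G.degIn (C.erase e) v = 1 := by
    have := hdeg_erase v
    rw [hdeg v ⟨e, he, hends ▸ Sym2.mem_mk_right u v⟩, endMult_mk_right huv] at this
    omega
  refine ⟨?_, Finset.erase_subset_erase e hCE, fun w hw => ?_, fun p q hp hq => ?_⟩
  · obtain ⟨f, hf, -⟩ := vIn_iff_degIn_pos.2 (hu ▸ Nat.one_pos)
    exact ⟨f, hf⟩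
  · obtain ⟨x, hx, rfl⟩ := exists_vIn_of_ends_eq_map (fun f _ => contractLink_ends G e u v f) hw
    by_cases hxu : identify u v x = u
    · rw [hxu, degIn_contractLink_left huv, hu, hv]
    · have hxv : x ≠ v := fun h => hxu (identify_eq_left_iff.2 (.inr h))
      have hxu' : x ≠ u := fun h => hxu (identify_eq_left_iff.2 (.inl h))
      obtain ⟨f, hf, hxf⟩ := hx
      have := hdeg_erase x
      rw [hdeg x ⟨f, Finset.mem_of_mem_erase hf, hxf⟩, endMult_mk_of_ne hxu' hxv] at this
      rw [identify_of_ne hxv, degIn_contractLink_of_ne hxu' hxv]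
      omega
  · obtain ⟨x, hx, rfl⟩ := exists_vIn_of_ends_eq_map (fun f _ => contractLink_ends G e u v f) hp
    obtain ⟨y, hy, rfl⟩ := exists_vIn_of_ends_eq_map (fun f _ => contractLink_ends G e u v f) hq
    refine Relation.ReflTransGen.lift' (identify u v) (fun a b hab => ?_) _ _ <| hconn x y
      (hx.elim fun f hf => ⟨f, Finset.mem_of_mem_erase hf.1, hf.2⟩)
      (hy.elim fun f hf => ⟨f, Finset.mem_of_mem_erase hf.1, hf.2⟩)
    obtain ⟨g, hg, hgab⟩ := hab
    by_cases hge : g = e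
    · -- both ends of `e` are sent to `u`
      subst hge
      have hmerge : ∀ x ∈ G.ends g, identify u v x = u := fun x hx =>
        identify_eq_left_iff.2 (Sym2.mem_iff.1 (hends ▸ hx))
      show Relation.ReflTransGen _ (identify u v a) (identify u v b)
      rw [hmerge a (hgab ▸ Sym2.mem_mk_left a b), hmerge b (hgab ▸ Sym2.mem_mk_right a b)]
    · exact .single <| adj_of_ends_eq_map (fun f _ => contractLink_ends G e u v f)
        ⟨g, Finset.mem_erase.2 ⟨hge, hg⟩, hgab⟩

lemma IsCycle.insert_of_contractLink {D : Finset α} (hD : (G.contractLink e u v).IsCycle D)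
    (heE : e ∈ G.E) (hends : G.ends e = s(u, v)) (huv : u ≠ v) (hu : G.degIn D u = 1)
    (hv : G.degIn D v = 1) : G.IsCycle (insert e D) := by
  obtain ⟨-, hDE, hdeg, hconn⟩ := hD
  have heD : e ∉ D := fun h => Finset.notMem_erase e G.E (hDE h)
  have hdeg_insert : ∀ w, G.degIn (insert e D) w = G.degIn D w + endMult s(u, v) w := fun w => by
    rw [degIn_eq_sum_endMult, Finset.sum_insert heD, hends, add_comm]; rfl
  have hHu : (G.contractLink e u v).degIn D u = 2 := by
    rw [degIn_contractLink_left huv, hu, hv]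
  have hdeg_of_ne : ∀ w, w ≠ u → w ≠ v →
      G.degIn (insert e D) w = (G.contractLink e u v).degIn D w := fun w hwu hwv => by
    rw [hdeg_insert, endMult_mk_of_ne hwu hwv, degIn_contractLink_of_ne hwu hwv, add_zero]
  refine ⟨⟨e, Finset.mem_insert_self e D⟩,
    Finset.insert_subset heE (hDE.trans (Finset.erase_subset e G.E)), fun w hw => ?_,
    fun x y hx hy => ?_⟩
  · by_cases hwu : w = u
    · rw [hwu, hdeg_insert, hu, endMult_mk_left huv]
    by_cases hwv : w = v
    · rw [hwv, hdeg_insert, hv, endMult_mk_right huv]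
    rw [vIn_iff_degIn_pos, hdeg_of_ne w hwu hwv, ← vIn_iff_degIn_pos] at hw
    rw [hdeg_of_ne w hwu hwv, hdeg w hw]
  · have hstep : ∀ z, Relation.ReflTransGen (G.Adj (insert e D)) z (identify u v z) := by
      intro z
      by_cases hzv : z = v
      · rw [hzv, identify, if_pos rfl]
        exact .single ⟨e, Finset.mem_insert_self e D, hends.trans Sym2.eq_swap⟩
      · rw [identify_of_ne hzv]
    have hlift : ∀ p q, (G.contractLink e u v).Adj D p q →
        Relation.ReflTransGen (G.Adj (insert e D)) p q := by
      rintro p q ⟨f, hf, hfpq⟩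
      obtain ⟨a, ha, rfl⟩ := Sym2.mem_map.1 (hfpq ▸ Sym2.mem_mk_left p q)
      obtain ⟨b, hb, rfl⟩ := Sym2.mem_map.1 (hfpq ▸ Sym2.mem_mk_right (identify u v a) q)
      exact (Std.Symm.symm _ _ (hstep a)).trans
        ((reach_of_mem_ends (Finset.mem_insert_of_mem hf) ha hb).trans (hstep b))
    have hHvIn : ∀ z, G.VIn (insert e D) z → (G.contractLink e u v).VIn D (identify u v z) := by
      intro z hz
      by_cases hzu : identify u v z = u
      · rw [hzu, vIn_iff_degIn_pos, hHu]
        exact two_pos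
      · have hzv : z ≠ v := fun h => hzu (identify_eq_left_iff.2 (.inr h))
        have hzu' : z ≠ u := fun h => hzu (identify_eq_left_iff.2 (.inl h))
        rw [identify_of_ne hzv, vIn_iff_degIn_pos, ← hdeg_of_ne z hzu' hzv]
        exact vIn_iff_degIn_pos.1 hz
    exact (hstep x).trans <| (Relation.reflTransGen_closed hlift _ _
      (hconn _ _ (hHvIn x hx) (hHvIn y hy))).trans (Std.Symm.symm _ _ (hstep y))

lemma IsCycle.of_contractLink_of_leftInverse {D : Finset α}
    (hD : (G.contractLink e u v).IsCycle D) {τ : V → V} (hτ : τ.Injective)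
    (hτ_identify : ∀ f ∈ D, ∀ x ∈ G.ends f, τ (identify u v x) = x) : G.IsCycle D :=
  hD.of_ends_eq_map (fun f hf => by
      rw [contractLink_ends, Sym2.map_map]
      exact ((Sym2.map_congr fun x hx => hτ_identify f hf x hx).trans
        (congrFun Sym2.map_id' _)).symm)
    hτ (hD.2.1.trans (Finset.erase_subset e G.E))

lemma IsCycle.of_contractLink {D : Finset α} (hD : (G.contractLink e u v).IsCycle D)
    (heE : e ∈ G.E) (hends : G.ends e = s(u, v)) (huv : u ≠ v) :
    G.IsCycle D ∨ G.IsCycle (insert e D) := by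
  have hle : G.degIn D u + G.degIn D v ≤ 2 := by
    rw [← degIn_contractLink_left huv]
    by_cases hu : (G.contractLink e u v).VIn D u
    · exact (hD.2.2.1 u hu).le
    · rw [vIn_iff_degIn_pos, not_lt] at hu
      exact hu.trans zero_le_two
  have not_mem_of_degIn_eq_zero : ∀ w, G.degIn D w = 0 → ∀ f ∈ D, ∀ x ∈ G.ends f, x ≠ w :=
    fun w hw f hf x hx hxw => (vIn_iff_degIn_pos.1 ⟨f, hf, hxw ▸ hx⟩).ne' hw
  rcases Nat.eq_zero_or_pos (G.degIn D v) with hv | hv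
  · exact .inl <| hD.of_contractLink_of_leftInverse Function.injective_id fun f hf x hx =>
      identify_of_ne (not_mem_of_degIn_eq_zero v hv f hf x hx)
  rcases Nat.eq_zero_or_pos (G.degIn D u) with hu | hu
  · -- `identify u v` agrees with `swap u v` off `u`
    refine .inl <| hD.of_contractLink_of_leftInverse (Equiv.swap u v).injective fun f hf x hx => ?_
    have hxu := not_mem_of_degIn_eq_zero u hu f hf x hx
    by_cases hxv : x = v
    · rw [hxv, identify, if_pos rfl, Equiv.swap_apply_left]
    · rw [identify_of_ne hxv, Equiv.swap_apply_of_ne_of_ne hxu hxv]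
  exact .inr <| hD.insert_of_contractLink heE hends huv (by omega) (by omega)

end Contract

section TwoIso

variable {G₁ : MGraph V α} {G₂ : MGraph W α}

lemma TwoIso.symm (h : G₁.TwoIso G₂) : G₂.TwoIso G₁ :=
  ⟨h.1.symm, fun X => (h.2 X).symm⟩

variable [DecidableEq α]

def ContractionsTwoIso (G₁ : MGraph V α) (G₂ : MGraph W α) : Prop :=
  ∀ e ∈ G₁.E, ∀ (u₁ v₁ : V) (u₂ v₂ : W), G₁.ends e = s(u₁, v₁) → G₂.ends e = s(u₂, v₂) →
    (G₁.contractLink e u₁ v₁).TwoIso (G₂.contractLink e u₂ v₂)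

lemma ContractionsTwoIso.symm (h : ContractionsTwoIso G₁ G₂) (hE : G₁.E = G₂.E) :
    ContractionsTwoIso G₂ G₁ := fun e he u₂ v₂ u₁ v₁ h₂ h₁ =>
  (h e (hE ▸ he) u₁ v₁ u₂ v₂ h₁ h₂).symm

lemma IsCycle.of_contractionsTwoIso (hl₁ : G₁.Loopless) (hl₂ : G₂.Loopless) (hE : G₁.E = G₂.E)
    (hcontr : ContractionsTwoIso G₁ G₂) {C : Finset α} (hC : G₁.IsCycle C)
    (ih : ∀ C' ⊂ C, G₂.IsCycle C' → G₁.IsCycle C') : G₂.IsCycle C := by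
  obtain ⟨e, he⟩ := hC.1
  have heE : e ∈ G₁.E := hC.2.1 he
  obtain ⟨u₁, v₁, h₁⟩ := G₁.exists_ends_eq_mk e
  obtain ⟨u₂, v₂, h₂⟩ := G₂.exists_ends_eq_mk e
  have huv₁ : u₁ ≠ v₁ := by simpa [h₁] using hl₁ e heE
  have huv₂ : u₂ ≠ v₂ := by simpa [h₂] using hl₂ e (hE ▸ heE)
  have hC₂ : (G₂.contractLink e u₂ v₂).IsCycle (C.erase e) :=
    ((hcontr e heE u₁ v₁ u₂ v₂ h₁ h₂).2 _).1 (hC.contractLink_erase he h₁ huv₁)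
  rcases hC₂.of_contractLink (hE ▸ heE) h₂ huv₂ with hC' | hC'
  · -- then `C.erase e` would be a cycle of `G₁` strictly inside `C`
    exact absurd (hC.eq_of_subset_s7 (ih _ (Finset.erase_ssubset he) hC') (Finset.erase_subset e C))
      (Finset.erase_ssubset he).ne
  · rwa [Finset.insert_erase he] at hC'

end TwoIso

end MGraph

theorem twoIso_of_all_contractions_twoIso_general
    {V₁ V₂ α : Type} [DecidableEq V₁] [DecidableEq V₂] [DecidableEq α]
    (G₁ : MGraph V₁ α) (G₂ : MGraph V₂ α)
    (hl₁ : G₁.Loopless) (hl₂ : G₂.Loopless)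
    (hE : G₁.E = G₂.E)
    (hcontr : ∀ e ∈ G₁.E, ∀ (u₁ v₁ : V₁) (u₂ v₂ : V₂),
      G₁.ends e = s(u₁, v₁) → G₂.ends e = s(u₂, v₂) →
      (G₁.contractLink e u₁ v₁).TwoIso (G₂.contractLink e u₂ v₂)) :
    G₁.TwoIso G₂ := by
  refine ⟨hE, fun C => ?_⟩
  induction C using Finset.strongInduction with
  | H C ih =>
    have hcontr' := MGraph.ContractionsTwoIso.symm hcontr hE
    exact ⟨fun hC => hC.of_contractionsTwoIso hl₁ hl₂ hE hcontr fun C' hC' => (ih C' hC').2,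
      fun hC => hC.of_contractionsTwoIso hl₂ hl₁ hE.symm hcontr' fun C' hC' => (ih C' hC').1⟩

/-- connected loopless graphs with the same edge set and vertex
count, all of whose single-edge contractions are 2-isomorphic, are 2-isomorphic. -/
theorem twoIso_of_all_contractions_twoIso
    {V₁ V₂ α : Type} [DecidableEq V₁] [DecidableEq V₂] [DecidableEq α]
    [Fintype V₁] [Fintype V₂]
    (G₁ : MGraph V₁ α) (G₂ : MGraph V₂ α)
    (hc₁ : G₁.Connected) (hc₂ : G₂.Connected)
    (hl₁ : G₁.Loopless) (hl₂ : G₂.Loopless)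
    (hE : G₁.E = G₂.E) (hV : Fintype.card V₁ = Fintype.card V₂)
    (hcontr : ∀ e ∈ G₁.E, ∀ (u₁ v₁ : V₁) (u₂ v₂ : V₂),
      G₁.ends e = s(u₁, v₁) → G₂.ends e = s(u₂, v₂) →
      (G₁.contractLink e u₁ v₁).TwoIso (G₂.contractLink e u₂ v₂)) :
    G₁.TwoIso G₂ :=
  twoIso_of_all_contractions_twoIso_general G₁ G₂ hl₁ hl₂ hE hcontr
end
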